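/- In the erasure game where only Player A knows the state S, the max-min value of the game to Player A is 3/2, achieved by the pure strategy A = S. -/

import Mathlib

inductive ActA | a0 | ae | a1
deriving DecidableEq

instance : Fintype ActA where
  elems := {ActA.a0, ActA.ae, ActA.a1}
  complete := by intro x; cases x <;> simp

noncomputable def payoff (M : ℝ) (a : ActA) (b s : Bool) : ℝ :=
  match a with
  | .a0 => if s then -M else (if b then 0 else 3)
  | .a1 => if s then (if b then 3 else 0) else -M
  | .ae => if b = s then 0 else 1

def IsDist {α : Type*} [Fintype α] (p : α → ℝ) : Prop :=
  (∀ x, 0 ≤ p x) ∧ ∑ x, p x = 1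

/-- Expected payoff when Player A knows the uniform state but Player B does not. -/
noncomputable def expPayA (M : ℝ) (pa : Bool → ActA → ℝ) (pb : Bool → ℝ) : ℝ :=
  (1/2) * ∑ s : Bool, ∑ a : ActA, ∑ b : Bool, pa s a * pb b * payoff M a b s

/-- The pure strategy A = S. -/
noncomputable def paStar : Bool → ActA → ℝ :=
  fun s a => if a = (if s then ActA.a1 else ActA.a0) then 1 else 0

/-!
Against the strategy A = S, Player B's action only decides whether A earns 3 (when b = s) or 0,
and since B does not see the uniform state, b = s has probability 1/2 whatever B does. Conversely,
if B plays uniformly then in either state every action of A earns at most 3/2 on average over b: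
3/2 for the truthful action, 1/2 for erasure and -M ≤ 3/2 for a lie.
-/

lemma IsDist.sum_mul_le {α : Type*} [Fintype α] {p f : α → ℝ} {c : ℝ} (hp : IsDist p)
    (hf : ∀ x, f x ≤ c) : ∑ x, p x * f x ≤ c :=
  calc ∑ x, p x * f x ≤ ∑ x, p x * c :=
        Finset.sum_le_sum fun x _ => mul_le_mul_of_nonneg_left (hf x) (hp.1 x)
    _ = c := by rw [← Finset.sum_mul, hp.2, one_mul]

lemma isDist_paStar (s : Bool) : IsDist (paStar s) := by
  refine ⟨fun a => ?_, ?_⟩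
  · unfold paStar; split_ifs <;> norm_num
  · cases s <;> simp [paStar]

lemma isDist_uniform : IsDist (fun _ : Bool => (1/2 : ℝ)) :=
  ⟨fun _ => by norm_num, by rw [Fintype.sum_bool]; norm_num⟩

lemma expPayA_paStar (M : ℝ) {pb : Bool → ℝ} (hpb : IsDist pb) : expPayA M paStar pb = 3/2 := by
  have hsum := hpb.2
  rw [Fintype.sum_bool] at hsum
  simp [expPayA, paStar, payoff]
  linarith

lemma sum_half_mul_payoff_le {M : ℝ} (hM : -3/2 ≤ M) (a : ActA) (s : Bool) :
    ∑ b, (1/2 : ℝ) * payoff M a b s ≤ 3/2 := by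
  cases a <;> cases s <;> simp [payoff] <;> linarith

lemma expPayA_uniform_le {M : ℝ} (hM : -3/2 ≤ M) {pa : Bool → ActA → ℝ}
    (hpa : ∀ s, IsDist (pa s)) : expPayA M pa (fun _ => 1/2) ≤ 3/2 := by
  have hstate (s : Bool) : ∑ a, pa s a * ∑ b, (1/2 : ℝ) * payoff M a b s ≤ 3/2 :=
    (hpa s).sum_mul_le (sum_half_mul_payoff_le hM · s)
  calc expPayA M pa (fun _ => 1/2)
      = (1/2) * ∑ s, ∑ a, pa s a * ∑ b, (1/2 : ℝ) * payoff M a b s := by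
        simp only [expPayA, Finset.mul_sum, mul_assoc]
    _ ≤ (1/2) * ∑ _s : Bool, (3/2 : ℝ) := by gcongr with s; exact hstate s
    _ = 3/2 := by norm_num

/-- If only Player A knows the state, the max-min value of the erasure game is 3/2,
achieved by the pure strategy A = S (for all sufficiently large penalty M). -/
theorem stmt4 : ∃ M0 : ℝ, ∀ M ≥ M0,
    (∀ s, IsDist (paStar s)) ∧
    (∀ pb : Bool → ℝ, IsDist pb → expPayA M paStar pb ≥ 3/2) ∧
    (∀ pa : Bool → ActA → ℝ, (∀ s, IsDist (pa s)) →
      ∃ pb : Bool → ℝ, IsDist pb ∧ expPayA M pa pb ≤ 3/2) := by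
  refine ⟨0, fun M hM => ⟨isDist_paStar, fun pb hpb => (expPayA_paStar M hpb).ge,
    fun pa hpa => ⟨_, isDist_uniform, expPayA_uniform_le (by linarith) hpa⟩⟩⟩
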